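/- Let ℓ ≥ 0 and m be integers with 0 ≤ m ≤ ℓ, and let P_ℓ be the Legendre polynomial of degree ℓ. Then for all real x: (d^m/dx^m) P_ℓ(x) = Σ_{q=m}^{⌊(ℓ+m)/2⌋} ((ℓ+m)!·(-1)^{q-m}·2^{m-2q} / ((ℓ+m-2q)!·q!·(q-m)!)) · (1-x²)^{q-m} · x^{ℓ+m-2q}. Equivalently, the associated Legendre function P_ℓ^m(x) = (1-x²)^{m/2}·(d^m/dx^m)P_ℓ(x) admits the stated development. -/

import Mathlib

/-!
The `(ℓ + m)`-th derivative of `(X² - 1)^ℓ` at `x` is `(ℓ + m)!` times the coefficient of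
`h^(ℓ + m)` in `((x + h)² - 1)^ℓ = (h (h + 2x) + (x² - 1))^ℓ`. Expanding binomially, first in
`x² - 1` and then in `(h + 2x)^(ℓ - l)`, leaves exactly one contribution for each power
`(x² - 1)^l`, the summand `q = m + l`; it vanishes once `m + 2l > ℓ`, which produces the upper limit
`⌊(ℓ + m)/2⌋`.
-/

/-- The Legendre polynomial of degree `ℓ`, via Rodrigues' formula
`P_ℓ = (1/(2^ℓ ℓ!)) (d/dx)^ℓ (x²-1)^ℓ`. -/
noncomputable def legendre (ℓ : ℕ) : Polynomial ℝ :=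
  Polynomial.C (1 / ((2 : ℝ) ^ ℓ * Nat.factorial ℓ)) *
    Polynomial.derivative^[ℓ] ((Polynomial.X ^ 2 - 1) ^ ℓ)

open Polynomial Finset
open scoped Nat

namespace Polynomial

theorem eval_iterate_derivative_eq_factorial_mul_taylor_coeff {R : Type*} [CommSemiring R]
    (f : R[X]) (r : R) (n : ℕ) :
    (derivative^[n] f).eval r = n ! * (taylor r f).coeff n := by
  rw [taylor_coeff, ← factorial_smul_hasseDeriv, LinearMap.smul_apply, eval_smul, nsmul_eq_mul]

theorem taylor_X_sq_sub_one {R : Type*} [CommRing R] (r : R) :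
    taylor r (X ^ 2 - 1) = X * (X + C (2 * r)) + C (r ^ 2 - 1) := by
  simp only [map_sub, taylor_X_pow, taylor_one, C_mul, C_pow, C_1, C_ofNat]
  ring

theorem coeff_X_mul_X_add_C_add_C_pow {R : Type*} [CommSemiring R] (a b : R) (n k : ℕ) :
    ((X * (X + C a) + C b) ^ n).coeff (n + k) =
      ∑ l ∈ range (n + 1),
        n.choose l * b ^ l * ((n - l).choose (k + l) * a ^ (n - l - (k + l))) := by
  rw [add_comm, add_pow, finsetSum_coeff]
  refine sum_congr rfl fun l hl => ?_
  have hln : l ≤ n := mem_range_succ_iff.mp hl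
  rw [show C b ^ l * (X * (X + C a)) ^ (n - l) * (n.choose l : R[X]) =
      C (n.choose l * b ^ l) * (X ^ (n - l) * (X + C a) ^ (n - l)) by
    rw [mul_pow, C_mul, C_pow, C_eq_natCast]; ring]
  rw [coeff_C_mul, show n + k = (n - l) + (k + l) by omega, coeff_X_pow_mul', if_pos le_self_add,
    Nat.add_sub_cancel_left, coeff_X_add_C_pow]
  ring

end Polynomial

theorem eval_iterate_derivative_legendre (ℓ m : ℕ) (x : ℝ) :
    (derivative^[m] (legendre ℓ)).eval x = (ℓ + m)! / (2 ^ ℓ * ℓ !) *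
      ∑ l ∈ range (ℓ + 1), ℓ.choose l * (x ^ 2 - 1) ^ l *
        ((ℓ - l).choose (m + l) * (2 * x) ^ (ℓ - l - (m + l))) := by
  rw [legendre, iterate_derivative_C_mul, ← Function.iterate_add_apply, eval_mul, eval_C,
    eval_iterate_derivative_eq_factorial_mul_taylor_coeff, taylor_pow, taylor_X_sq_sub_one,
    add_comm m ℓ, coeff_X_mul_X_add_C_add_C_pow]
  ring

theorem legendre_deriv_summand_eq {ℓ m l : ℕ} (h : m + 2 * l ≤ ℓ) (x : ℝ) :
    (ℓ + m)! / (2 ^ ℓ * ℓ !) * (ℓ.choose l * (x ^ 2 - 1) ^ l *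
        ((ℓ - l).choose (m + l) * (2 * x) ^ (ℓ - l - (m + l)))) =
      (ℓ + m)! * (-1) ^ (m + l - m) * (2 : ℝ) ^ ((m : ℤ) - 2 * ((m + l : ℕ) : ℤ)) /
          ((ℓ + m - 2 * (m + l))! * (m + l)! * (m + l - m)!) *
        (1 - x ^ 2) ^ (m + l - m) * x ^ (ℓ + m - 2 * (m + l)) := by
  obtain ⟨r, rfl⟩ : ∃ r, ℓ = m + 2 * l + r := ⟨ℓ - (m + 2 * l), by omega⟩
  have hzpow : (2 : ℝ) ^ ((m : ℤ) - 2 * ((m + l : ℕ) : ℤ)) = 1 / 2 ^ (m + 2 * l) := by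
    rw [show (m : ℤ) - 2 * ((m + l : ℕ) : ℤ) = -((m + 2 * l : ℕ) : ℤ) by push_cast; ring,
      zpow_neg, zpow_natCast, one_div]
  rw [Nat.cast_choose ℝ (by omega : l ≤ m + 2 * l + r),
    Nat.cast_choose ℝ (by omega : m + l ≤ m + 2 * l + r - l),
    show m + 2 * l + r - l = m + l + r by omega, Nat.add_sub_cancel_left, Nat.add_sub_cancel_left,
    show m + 2 * l + r + m - 2 * (m + l) = r by omega, hzpow, ← neg_sub 1 (x ^ 2), neg_pow,
    pow_add 2 (m + 2 * l) r, mul_pow]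
  field_simp

theorem legendre_deriv_explicit_general (ℓ m : ℕ) (x : ℝ) :
    (Polynomial.derivative^[m] (legendre ℓ)).eval x
      = ∑ q ∈ Finset.Icc m ((ℓ + m) / 2),
          ((Nat.factorial (ℓ + m) : ℝ) * (-1 : ℝ) ^ (q - m) * (2 : ℝ) ^ ((m : ℤ) - 2 * q) /
              ((Nat.factorial (ℓ + m - 2 * q) : ℝ) * (Nat.factorial q : ℝ) *
                (Nat.factorial (q - m) : ℝ))) *
            (1 - x ^ 2) ^ (q - m) * x ^ (ℓ + m - 2 * q) := by
  have hsub : range ((ℓ + m) / 2 + 1 - m) ⊆ range (ℓ + 1) := range_subset_range.mpr (by omega)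
  have hvanish : ∀ l ∈ range (ℓ + 1), l ∉ range ((ℓ + m) / 2 + 1 - m) →
      ℓ.choose l * (x ^ 2 - 1) ^ l * ((ℓ - l).choose (m + l) * (2 * x) ^ (ℓ - l - (m + l))) = 0 :=
    fun l _ hl => by
      rw [Nat.choose_eq_zero_of_lt (n := ℓ - l) (by simp only [mem_range] at hl; omega)]
      simp
  rw [eval_iterate_derivative_legendre, ← sum_subset hsub hvanish, mul_sum,
    ← Ico_add_one_right_eq_Icc, sum_Ico_eq_sum_range]
  exact sum_congr rfl fun l hl => legendre_deriv_summand_eq (by simp only [mem_range] at hl; omega) x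

/-- Explicit development of the `m`-th derivative of the Legendre polynomial `P_ℓ`
(equivalently, of the associated Legendre function `P_ℓ^m(x) = (1-x²)^{m/2} P_ℓ^{(m)}(x)`). -/
theorem legendre_deriv_explicit (ℓ m : ℕ) (hm : m ≤ ℓ) (x : ℝ) :
    (Polynomial.derivative^[m] (legendre ℓ)).eval x
      = ∑ q ∈ Finset.Icc m ((ℓ + m) / 2),
          ((Nat.factorial (ℓ + m) : ℝ) * (-1 : ℝ) ^ (q - m) * (2 : ℝ) ^ ((m : ℤ) - 2 * q) /
              ((Nat.factorial (ℓ + m - 2 * q) : ℝ) * (Nat.factorial q : ℝ) *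
                (Nat.factorial (q - m) : ℝ))) *
            (1 - x ^ 2) ^ (q - m) * x ^ (ℓ + m - 2 * q) :=
  legendre_deriv_explicit_general ℓ m x
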